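/- arXiv:1202.4240 — 3 statements merged into one kernel-verified Lean document; each statement's English description precedes it below -/
import Mathlib

section
/- For positive integers n and q and a non-negative integer k, the limit as z tends to -k of Γ(n z) / Γ(q z) equals (-1)^((n - q) * k) * (q / n) * (q k)! / (n k)!. -/
/-!
`Γ` has a simple pole at `-m` with residue `(-1)^m / m!`: the case `m = 0` is in Mathlib, and
`Γ(w + 1) = w Γ(w)` carries the pole at `-m` to the one at `-(m + 1)`. Scaling by `c`, the
function `(z + k) Γ(c z)` tends to `(-1)^(c k) / (c (c k)!)` as `z → -k`, and the quotient of
these limits for `c = n` and `c = q` is the claimed value.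
-/

open Filter Topology Complex Nat

theorem tendsto_add_nat_mul_Gamma_nhdsNE_neg_nat (m : ℕ) :
    Tendsto (fun w : ℂ => (w + m) * Gamma w) (𝓝[≠] (-m)) (𝓝 ((-1) ^ m / m !)) := by
  induction m with
  | zero => simpa using tendsto_self_mul_Gamma_nhds_zero
  | succ m ih =>
    have hpole : (-(m + 1 : ℕ) : ℂ) ≠ 0 := neg_ne_zero.mpr (Nat.cast_ne_zero.mpr m.succ_ne_zero)
    have hshift : Tendsto (fun w : ℂ => w + 1) (𝓝[≠] (-(m + 1 : ℕ))) (𝓝[≠] (-m)) :=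
      map_add_right_nhdsNE.le.trans_eq (by push_cast; ring_nf)
    have hlim := (ih.comp hshift).div (tendsto_id.mono_left nhdsWithin_le_nhds) hpole
    have hrec : ∀ᶠ w in 𝓝[≠] (-(m + 1 : ℕ) : ℂ),
        (w + 1 + m) * Gamma (w + 1) / w = (w + (m + 1 : ℕ)) * Gamma w := by
      filter_upwards [(eventually_ne_nhds hpole).filter_mono nhdsWithin_le_nhds] with w hw
      rw [Gamma_add_one w hw]
      push_cast
      field_simp
      ring
    convert hlim.congr' hrec using 2
    push_cast [Nat.factorial_succ]
    field_simp
    ring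

theorem tendsto_add_nat_mul_Gamma_natCast_mul_nhdsNE (c k : ℕ) (hc : c ≠ 0) :
    Tendsto (fun z : ℂ => (z + k) * Gamma (c * z)) (𝓝[≠] (-k))
      (𝓝 ((-1) ^ (c * k) / (c * (c * k) !))) := by
  have hc' : (c : ℂ) ≠ 0 := Nat.cast_ne_zero.mpr hc
  have hscale : Tendsto (fun z : ℂ => c * z) (𝓝[≠] (-k)) (𝓝[≠] (-(c * k : ℕ))) := by
    rw [Nat.cast_mul, ← mul_neg, ← smul_eq_mul, punctured_nhds_smul₀ hc']
    exact tendsto_map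
  convert ((tendsto_add_nat_mul_Gamma_nhdsNE_neg_nat (c * k)).comp hscale).div_const (c : ℂ)
    using 1
  · ext z
    simp only [Function.comp_apply]
    push_cast
    field_simp
  · rw [div_div, mul_comm (_ ! : ℂ)]

theorem gamma_ratio_limit (n q : ℕ) (hn : 0 < n) (hq : 0 < q) (k : ℕ) :
    Filter.Tendsto (fun z : ℂ => Complex.Gamma (n * z) / Complex.Gamma (q * z))
      (nhdsWithin (-(k : ℂ)) {(-(k : ℂ))}ᶜ)
      (nhds ((-1 : ℂ) ^ (((n : ℤ) - q) * k) * ((q : ℂ) / n) *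
        (Nat.factorial (q * k) : ℂ) / (Nat.factorial (n * k) : ℂ))) := by
  have hlim := (tendsto_add_nat_mul_Gamma_natCast_mul_nhdsNE n k hn.ne').div
    (tendsto_add_nat_mul_Gamma_natCast_mul_nhdsNE q k hq.ne') (by simp [hq.ne', Nat.factorial_ne_zero])
  have hcancel : ∀ᶠ z in 𝓝[≠] (-(k : ℂ)),
      (z + k) * Gamma (n * z) / ((z + k) * Gamma (q * z)) = Gamma (n * z) / Gamma (q * z) := by
    filter_upwards [self_mem_nhdsWithin] with z hz
    exact mul_div_mul_left _ _ (fun h => hz (eq_neg_of_add_eq_zero_left h))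
  convert hlim.congr' hcancel using 2
  have hsign : (-1 : ℂ) ^ (((n : ℤ) - q) * k) = (-1) ^ (n * k) / (-1) ^ (q * k) := by
    rw [sub_mul, zpow_sub₀ (by norm_num), ← Nat.cast_mul, ← Nat.cast_mul, zpow_natCast,
      zpow_natCast]
  rw [hsign]
  have hn' : (n : ℂ) ≠ 0 := Nat.cast_ne_zero.mpr hn.ne'
  have hq' : (q : ℂ) ≠ 0 := Nat.cast_ne_zero.mpr hq.ne'
  field_simp
end

section
/- For positive integers n and q and non-negative integers i and k, the limit as z tends to -k of ψ^(i)(n z) / ψ^(i)(q z) equals (q / n)^(i+1), where ψ^(i) denotes the i-th derivative of the digamma function. -/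
/-!
The shift formula `ψ (w + m + 1) = ψ w + ∑_{j ≤ m} (w + j)⁻¹` shows that `ψ` has a simple pole of
residue `-1` at `-m`, so `(w + m) ^ (i + 1) * ψ^(i) w → (-1) ^ (i + 1) * i!` as `w → -m`. At
`w = p z` with `z → -k` this says `ψ^(i) (p z) ≈ (-1) ^ (i + 1) * i! / (p (z + k)) ^ (i + 1)`;
for `p = n` and `p = q` the nonzero constant cancels in the quotient, leaving `(q / n) ^ (i + 1)`.
-/

open Filter Topology Finset Nat

section SimplePole

variable {𝕜 : Type*} [NontriviallyNormedField 𝕜]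

theorem Filter.EventuallyEq.iteratedDeriv_of_isOpen {F : Type*} [NormedAddCommGroup F]
    [NormedSpace 𝕜 F] {f g : 𝕜 → F} {s : Set 𝕜} {a : 𝕜}
    (h : f =ᶠ[𝓝[s] a] g) (hs : IsOpen s) (n : ℕ) :
    iteratedDeriv n f =ᶠ[𝓝[s] a] iteratedDeriv n g := by
  filter_upwards [eventually_eventually_nhdsWithin.2 h, self_mem_nhdsWithin] with w hw hws
  exact EventuallyEq.iteratedDeriv_eq n (by rwa [hs.nhdsWithin_eq hws] at hw)

theorem iteratedDeriv_inv_sub_const (n : ℕ) (c x : 𝕜) :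
    iteratedDeriv n (fun z => (z - c)⁻¹) x = (-1) ^ n * n ! * (x - c) ^ (-1 - n : ℤ) := by
  rw [iteratedDeriv_comp_sub_const n Inv.inv c, iteratedDeriv_eq_iterate]
  exact iter_deriv_inv n (x - c)

theorem tendsto_sub_pow_mul_iteratedDeriv_of_eventuallyEq [CompleteSpace 𝕜] {f g : 𝕜 → 𝕜}
    {a r : 𝕜} (hg : AnalyticAt 𝕜 g a) (hf : f =ᶠ[𝓝[≠] a] fun w => r * (w - a)⁻¹ + g w)
    (i : ℕ) :
    Tendsto (fun w => (w - a) ^ (i + 1) * iteratedDeriv i f w) (𝓝[≠] a)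
      (𝓝 ((-1) ^ i * i ! * r)) := by
  have hiter : iteratedDeriv i f =ᶠ[𝓝[≠] a]
      fun w => r * ((-1) ^ i * i ! * (w - a) ^ (-1 - i : ℤ)) + iteratedDeriv i g w := by
    filter_upwards [hf.iteratedDeriv_of_isOpen isOpen_compl_singleton i,
      eventually_nhdsWithin_of_eventually_nhds hg.eventually_analyticAt,
      self_mem_nhdsWithin] with w hw hgw hwa
    have hwa : w - a ≠ 0 := sub_ne_zero.2 hwa
    rw [hw, iteratedDeriv_fun_add (by fun_prop (disch := exact hwa)) hgw.contDiffAt,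
      iteratedDeriv_const_mul_field, iteratedDeriv_inv_sub_const]
  have hcont : ContinuousAt (fun w => (w - a) ^ (i + 1) * iteratedDeriv i g w) a := by
    refine ContinuousAt.mul (by fun_prop) ?_
    rw [iteratedDeriv_eq_iterate]
    exact (hg.iterated_deriv i).continuousAt
  have hlim : Tendsto (fun w => (-1) ^ i * i ! * r + (w - a) ^ (i + 1) * iteratedDeriv i g w)
      (𝓝[≠] a) (𝓝 ((-1) ^ i * i ! * r)) := by
    simpa using tendsto_const_nhds.add (hcont.tendsto.mono_left nhdsWithin_le_nhds)
  refine hlim.congr' ?_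
  filter_upwards [hiter, self_mem_nhdsWithin] with w hw hwa
  have hwa : w - a ≠ 0 := sub_ne_zero.2 hwa
  have hzpow : (w - a) ^ (-1 - i : ℤ) = ((w - a) ^ (i + 1))⁻¹ := by
    rw [← zpow_natCast, ← zpow_neg]
    push_cast
    ring_nf
  rw [hw, hzpow]
  field_simp

end SimplePole

theorem tendsto_const_mul_nhdsNE {𝕜 : Type*} [NormedField 𝕜] {p : 𝕜} (hp : p ≠ 0) (a : 𝕜) :
    Tendsto (p * ·) (𝓝[≠] a) (𝓝[≠] (p * a)) := by
  refine tendsto_nhdsWithin_iff.2 ⟨(continuous_const_mul p).tendsto a |>.mono_left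
    nhdsWithin_le_nhds, ?_⟩
  filter_upwards [self_mem_nhdsWithin] with z hz
  simpa [hp] using hz

namespace Complex

theorem eventually_ne_neg_natCast_nhdsNE (a : ℂ) : ∀ᶠ w in 𝓝[≠] a, ∀ j : ℕ, w ≠ -(j : ℂ) := by
  filter_upwards [(Meromorphic.Gamma a).eventually_analyticAt] with w hw j rfl
  exact not_differentiableAt_Gamma_neg_nat j hw.differentiableAt

theorem analyticAt_Gamma {s : ℂ} (hs : ∀ m : ℕ, s ≠ -m) : AnalyticAt ℂ Gamma s := by
  simpa [Pi.inv_def] using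
    (differentiable_one_div_Gamma.analyticAt s).inv (by simpa using Gamma_ne_zero hs)

theorem analyticAt_digamma {s : ℂ} (hs : ∀ m : ℕ, s ≠ -m) : AnalyticAt ℂ digamma s :=
  (analyticAt_Gamma hs).deriv.div (analyticAt_Gamma hs) (Gamma_ne_zero hs)

theorem digamma_add_nat {s : ℂ} (hs : ∀ j : ℕ, s ≠ -j) (m : ℕ) :
    digamma (s + m) = digamma s + ∑ j ∈ range m, (s + j)⁻¹ := by
  induction m with
  | zero => simp
  | succ m ih =>
    have hsm : ∀ j : ℕ, s + m ≠ -j := fun j h => hs (j + m) (by push_cast; linear_combination h)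
    rw [Nat.cast_succ, ← add_assoc, digamma_apply_add_one _ hsm, ih, sum_range_succ, add_assoc]

theorem analyticAt_digamma_add_sub_sum (m : ℕ) :
    AnalyticAt ℂ (fun w => digamma (w + (m + 1)) - ∑ j ∈ range m, (w + j)⁻¹) (-m) := by
  refine ((analyticAt_digamma fun j => ?_).comp (by fun_prop)).sub
    (Finset.analyticAt_fun_sum _ fun j hj => (analyticAt_id.add analyticAt_const).inv ?_)
  · rw [neg_add_cancel_left]
    norm_cast
    simp
  · show -(m : ℂ) + j ≠ 0
    rw [Ne, neg_add_eq_zero]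
    exact_mod_cast (mem_range.1 hj).ne'

theorem digamma_eventuallyEq_nhdsNE (m : ℕ) :
    digamma =ᶠ[𝓝[≠] (-m : ℂ)]
      fun w => -1 * (w - -m)⁻¹ + (digamma (w + (m + 1)) - ∑ j ∈ range m, (w + j)⁻¹) := by
  filter_upwards [eventually_ne_neg_natCast_nhdsNE (-m)] with w hw
  have h := digamma_add_nat hw (m + 1)
  rw [sum_range_succ] at h
  push_cast at h
  rw [sub_neg_eq_add]
  linear_combination -h

theorem tendsto_pow_mul_iteratedDeriv_digamma (i m : ℕ) :
    Tendsto (fun w => (w + m) ^ (i + 1) * iteratedDeriv i digamma w) (𝓝[≠] (-m : ℂ))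
      (𝓝 ((-1) ^ (i + 1) * i !)) := by
  simpa [pow_succ] using tendsto_sub_pow_mul_iteratedDeriv_of_eventuallyEq
    (analyticAt_digamma_add_sub_sum m) (digamma_eventuallyEq_nhdsNE m) i

theorem tendsto_pow_mul_iteratedDeriv_digamma_const_mul (i k : ℕ) {p : ℕ} (hp : p ≠ 0) :
    Tendsto (fun z => (p * (z + k)) ^ (i + 1) * iteratedDeriv i digamma (p * z))
      (𝓝[≠] (-k : ℂ)) (𝓝 ((-1) ^ (i + 1) * i !)) := by
  have hscale := tendsto_const_mul_nhdsNE (Nat.cast_ne_zero.2 hp : (p : ℂ) ≠ 0) (-k)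
  rw [mul_neg, ← Nat.cast_mul] at hscale
  refine ((tendsto_pow_mul_iteratedDeriv_digamma i (p * k)).comp hscale).congr fun z => ?_
  simp only [Function.comp_apply]
  push_cast
  ring

end Complex

theorem polygamma_ratio_limit (n q : ℕ) (hn : 0 < n) (hq : 0 < q) (i k : ℕ) :
    Filter.Tendsto
      (fun z : ℂ =>
        iteratedDeriv i (fun w : ℂ => deriv Complex.Gamma w / Complex.Gamma w) (n * z) /
        iteratedDeriv i (fun w : ℂ => deriv Complex.Gamma w / Complex.Gamma w) (q * z))
      (nhdsWithin (-(k : ℂ)) {(-(k : ℂ))}ᶜ)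
      (nhds (((q : ℂ) / n) ^ (i + 1))) := by
  have hψ : (fun w : ℂ => deriv Complex.Gamma w / Complex.Gamma w) = Complex.digamma := rfl
  rw [hψ]
  have hc : ((-1) ^ (i + 1) * i ! : ℂ) ≠ 0 := by simp [Nat.factorial_ne_zero]
  have hratio := ((Complex.tendsto_pow_mul_iteratedDeriv_digamma_const_mul i k hn.ne').div
    (Complex.tendsto_pow_mul_iteratedDeriv_digamma_const_mul i k hq.ne') hc).const_mul
      (((q : ℂ) / n) ^ (i + 1))
  rw [div_self hc, mul_one] at hratio
  refine hratio.congr' ?_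
  filter_upwards [self_mem_nhdsWithin] with z hz
  have hzk : z + k ≠ 0 := fun h => hz (eq_neg_of_add_eq_zero_left h)
  have hn' : (n : ℂ) ≠ 0 := Nat.cast_ne_zero.2 hn.ne'
  have hq' : (q : ℂ) ≠ 0 := Nat.cast_ne_zero.2 hq.ne'
  have hone :
      ((q : ℂ) / n) ^ (i + 1) * ((n * (z + k)) ^ (i + 1) / (q * (z + k)) ^ (i + 1)) = 1 := by
    rw [mul_pow, mul_pow, div_pow]
    field_simp
  rw [Pi.div_apply, mul_div_mul_comm, ← mul_assoc, hone, one_mul]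
end

section
/- For a non-negative integer m and a non-negative integer i, the limit as z tends to -m of (z + m)^(i+1) * Γ^(i)(z) equals (-1)^m * (-1)^i * i! / m!, where Γ^(i) is the i-th derivative of the Gamma function. -/
/-! Near `-m`, the functional equation gives `(z + m) Γ(z) = R(z) := Γ(z + m + 1) / z⁽ᵐ⁾` with
`z⁽ᵐ⁾ = z (z + 1) ⋯ (z + m - 1)` the rising factorial, so `R` is analytic at `-m` with
`R(-m) = (-1)ᵐ / m!`. Writing `R(z) = R(-m) + (z + m) A(z)` with `A = dslope R (-m)` analytic
splits off the principal part, `Γ(z) = A(z) + R(-m) / (z + m)`. Differentiating `i` times,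
`Γ⁽ⁱ⁾(z) = A⁽ⁱ⁾(z) + R(-m) (-1)ⁱ i! (z + m)^(-i-1)`, and after multiplying by `(z + m)^(i+1)` only
`(-1)ⁱ i! R(-m)` survives in the limit. -/

open Filter Topology Polynomial
open scoped Nat

section SimplePole

variable {𝕜 : Type*} [NontriviallyNormedField 𝕜]

theorem iteratedDeriv_sub_const_inv (k : ℕ) (a z : 𝕜) :
    iteratedDeriv k (fun w => (w - a)⁻¹) z = (-1) ^ k * k ! * (z - a) ^ (-1 - k : ℤ) := by
  rw [iteratedDeriv_comp_sub_const k Inv.inv a, iteratedDeriv_eq_iterate]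
  exact iter_deriv_inv k (z - a)

theorem iteratedDeriv_add_const_mul_sub_inv {k : ℕ} {A : 𝕜 → 𝕜} {a c z : 𝕜}
    (hA : ContDiffAt 𝕜 k A z) (hz : z ≠ a) :
    iteratedDeriv k (fun w => A w + c * (w - a)⁻¹) z =
      iteratedDeriv k A z + c * ((-1) ^ k * k ! * (z - a) ^ (-1 - k : ℤ)) := by
  have hza : z - a ≠ 0 := sub_ne_zero.2 hz
  have hinv : ContDiffAt 𝕜 k (fun w => c * (w - a)⁻¹) z := by fun_prop (disch := assumption)
  rw [iteratedDeriv_fun_add hA hinv, iteratedDeriv_const_mul_field, iteratedDeriv_sub_const_inv]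

variable [CompleteSpace 𝕜]

theorem tendsto_sub_pow_succ_mul_iteratedDeriv_of_eventuallyEq_add_inv {f A : 𝕜 → 𝕜} {a c : 𝕜}
    (hA : AnalyticAt 𝕜 A a) (hf : ∀ᶠ z in 𝓝[≠] a, f z = A z + c * (z - a)⁻¹) (i : ℕ) :
    Tendsto (fun z => (z - a) ^ (i + 1) * iteratedDeriv i f z) (𝓝[≠] a)
      (𝓝 ((-1) ^ i * i ! * c)) := by
  have hloc : ∀ᶠ z in 𝓝[≠] a, f =ᶠ[𝓝 z] fun w => A w + c * (w - a)⁻¹ := by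
    filter_upwards [eventually_eventually_nhdsWithin.2 hf, self_mem_nhdsWithin] with z hz hza
    rwa [isOpen_compl_singleton.nhdsWithin_eq hza] at hz
  have hderiv : ∀ᶠ z in 𝓝[≠] a, (z - a) ^ (i + 1) * iteratedDeriv i f z =
      (z - a) ^ (i + 1) * iteratedDeriv i A z + (-1) ^ i * i ! * c := by
    filter_upwards [hloc, nhdsWithin_le_nhds hA.eventually_analyticAt, self_mem_nhdsWithin]
      with z hfz hAz hza
    rw [(hfz.iteratedDeriv i).eq_of_nhds, iteratedDeriv_add_const_mul_sub_inv hAz.contDiffAt hza]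
    have hcancel : (z - a) ^ (i + 1) * (z - a) ^ (-1 - i : ℤ) = 1 := by
      rw [← zpow_natCast, ← zpow_add₀ (sub_ne_zero.2 hza), Nat.cast_succ,
        show (i + 1 + (-1 - i) : ℤ) = 0 by ring, zpow_zero]
    linear_combination ((-1) ^ i * i ! * c) * hcancel
  have hcont : ContinuousAt
      (fun z => (z - a) ^ (i + 1) * iteratedDeriv i A z + (-1) ^ i * i ! * c) a := by
    have hAi := (hA.iterated_deriv i).continuousAt
    rw [← iteratedDeriv_eq_iterate] at hAi
    fun_prop
  refine (tendsto_congr' hderiv).2 ?_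
  simpa using hcont.tendsto.mono_left nhdsWithin_le_nhds

theorem tendsto_sub_pow_succ_mul_iteratedDeriv_of_sub_mul_eq {f R : 𝕜 → 𝕜} {a : 𝕜}
    (hR : AnalyticAt 𝕜 R a) (hf : ∀ᶠ z in 𝓝[≠] a, (z - a) * f z = R z) (i : ℕ) :
    Tendsto (fun z => (z - a) ^ (i + 1) * iteratedDeriv i f z) (𝓝[≠] a)
      (𝓝 ((-1) ^ i * i ! * R a)) := by
  obtain ⟨p, hp⟩ := hR
  refine tendsto_sub_pow_succ_mul_iteratedDeriv_of_eventuallyEq_add_inv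
    hp.has_fpower_series_dslope_fslope.analyticAt ?_ i
  filter_upwards [hf, self_mem_nhdsWithin] with z hz hza
  have hza' : z - a ≠ 0 := sub_ne_zero.2 hza
  have hslope := sub_smul_dslope R a z
  rw [smul_eq_mul] at hslope
  field_simp
  linear_combination hz - hslope

end SimplePole

namespace Complex

theorem eventually_ne_neg_natCast (m : ℕ) :
    ∀ᶠ z in 𝓝[≠] (-(m : ℂ)), ∀ k : ℕ, z ≠ -(k : ℂ) := by
  filter_upwards [(Meromorphic.Gamma _).eventually_analyticAt] with z hz k rfl
  exact not_differentiableAt_Gamma_neg_nat k hz.differentiableAt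

theorem add_natCast_mul_Gamma (m : ℕ) {z : ℂ} (hz : ∀ k : ℕ, z ≠ -k) :
    (z + m) * Gamma z = Gamma (z + (m + 1 : ℕ)) / (ascPochhammer ℂ m).eval z := by
  have hpoch : (ascPochhammer ℂ m).eval z ≠ 0 := by
    rw [ne_eq, ascPochhammer_eval_eq_zero_iff]
    rintro ⟨k, -, hk⟩
    exact hz k (by rw [hk, neg_neg])
  have h := Gamma_add_nat_div_Gamma_eq (n := m + 1) z hz
  rw [ascPochhammer_succ_right, eval_mul, eval_add, eval_X, eval_natCast] at h
  rw [eq_div_iff hpoch, ← div_mul_cancel₀ (Gamma (z + (m + 1 : ℕ))) (Gamma_ne_zero hz), h]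
  ring

theorem ascPochhammer_eval_neg_natCast_self (m : ℕ) :
    (ascPochhammer ℂ m).eval (-(m : ℂ)) = (-1) ^ m * m ! := by
  rw [ascPochhammer_eval_neg_eq_descPochhammer, descPochhammer_eval_eq_descFactorial,
    Nat.descFactorial_self]

theorem analyticAt_Gamma_one : AnalyticAt ℂ Gamma 1 := by
  simpa using (differentiable_one_div_Gamma.analyticAt 1).fun_inv (by simp [Gamma_one])

end Complex

theorem gamma_deriv_leading_coeff (m i : ℕ) :
    Filter.Tendsto (fun z : ℂ => (z + m) ^ (i + 1) * iteratedDeriv i Complex.Gamma z)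
      (nhdsWithin (-(m : ℂ)) {(-(m : ℂ))}ᶜ)
      (nhds ((-1 : ℂ) ^ m * (-1 : ℂ) ^ i * (Nat.factorial i : ℂ) / (Nat.factorial m : ℂ))) := by
  set R : ℂ → ℂ := fun z => Complex.Gamma (z + (m + 1 : ℕ)) / (ascPochhammer ℂ m).eval z
  have hR : AnalyticAt ℂ R (-m) := by
    have hΓ : AnalyticAt ℂ (fun z : ℂ => Complex.Gamma (z + (m + 1 : ℕ))) (-m) :=
      Complex.analyticAt_Gamma_one.comp_of_eq (by fun_prop) (by push_cast; ring)
    refine hΓ.div (analyticAt_id.aeval_polynomial _) ?_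
    simp [Complex.ascPochhammer_eval_neg_natCast_self, Nat.factorial_ne_zero]
  have hRm : R (-m) = ((-1 : ℂ) ^ m * m !)⁻¹ := by
    simp [R, Complex.ascPochhammer_eval_neg_natCast_self]
  have hpole : ∀ᶠ z in 𝓝[≠] (-(m : ℂ)), (z - -m) * Complex.Gamma z = R z := by
    filter_upwards [Complex.eventually_ne_neg_natCast m] with z hz
    rw [sub_neg_eq_add]
    exact Complex.add_natCast_mul_Gamma m hz
  have h := tendsto_sub_pow_succ_mul_iteratedDeriv_of_sub_mul_eq hR hpole i
  simp only [sub_neg_eq_add, hRm] at h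
  convert h using 2
  rw [mul_inv, ← inv_pow, inv_neg_one]
  ring
end
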